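/- Let w be a word, 𝒫 a Parikh vector, e a position of w and t an integer with 0 ≤ t < |𝒫|. Then there is at most one left-maximal occurrence with abelian period 𝒫 ending at position e with tail length t: if (b₁,h₁,t,e) and (b₂,h₂,t,e) are both left-maximal occurrences with abelian period 𝒫 in w, then b₁ = b₂ and h₁ = h₂. (Consequently, at most |𝒫| left-maximal occurrences with abelian period 𝒫 end at any given position, one per tail length.) -/

import Mathlib

/-- The Parikh vector of a word `v`: the number of occurrences of each letter. -/
def parikh {α : Type*} [DecidableEq α] (v : List α) : α → ℕ := fun a => v.count a

/-- The norm of a Parikh vector: the sum of its components. -/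
def pnorm {α : Type*} [Fintype α] (P : α → ℕ) : ℕ := ∑ a, P a

/-- Non-strict containment of Parikh vectors: `P ⊆ Q`. -/
def PLe {α : Type*} (P Q : α → ℕ) : Prop := ∀ a, P a ≤ Q a

/-- Strict containment of Parikh vectors: `P ⊂ Q`, i.e. componentwise `≤` and smaller norm. -/
def PLt {α : Type*} [Fintype α] (P Q : α → ℕ) : Prop :=
  (∀ a, P a ≤ Q a) ∧ pnorm P < pnorm Q

/-- The substring `w[i..j]` of `w`, from position `i` to position `j`, both included. -/
def substr {α : Type*} (w : List α) (i j : ℕ) : List α := (w.drop i).take (j + 1 - i)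

/-- `(b,h,t,e)` is an occurrence of a substring of `w` with abelian period `P`:
`w[b..e] = u₀u₁⋯u_{k-1}u_k` for some `k ≥ 2`, with `|u₀| = h`, `|u_k| = t`,
`𝒫_{u_1} = ⋯ = 𝒫_{u_{k-1}} = P`, `𝒫_{u₀} ⊂ P` and `𝒫_{u_k} ⊂ P`. -/
def IsOcc {α : Type*} [Fintype α] [DecidableEq α]
    (w : List α) (P : α → ℕ) (b h t e : ℕ) : Prop :=
  b ≤ e ∧ e < w.length ∧
  ∃ (u0 uk : List α) (us : List (List α)),
    substr w b e = u0 ++ us.flatten ++ uk ∧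
    u0.length = h ∧ uk.length = t ∧
    1 ≤ us.length ∧
    (∀ u ∈ us, parikh u = P) ∧
    PLt (parikh u0) P ∧ PLt (parikh uk) P

/-- An occurrence `(b,h,t,e)` with abelian period `P` is left-maximal if there is no
occurrence `(b-1,h',t',e)` with the same abelian period `P`. -/
def LeftMaximal {α : Type*} [Fintype α] [DecidableEq α]
    (w : List α) (P : α → ℕ) (b h t e : ℕ) : Prop :=
  IsOcc w P b h t e ∧ ∀ b' h' t', b' + 1 = b → ¬ IsOcc w P b' h' t' e

/-- An occurrence `(b,h,t,e)` with abelian period `P` is right-maximal if there is no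
occurrence `(b,h',t',e+1)` with the same abelian period `P`. -/
def RightMaximal {α : Type*} [Fintype α] [DecidableEq α]
    (w : List α) (P : α → ℕ) (b h t e : ℕ) : Prop :=
  IsOcc w P b h t e ∧ ∀ h' t', ¬ IsOcc w P b h' t' (e + 1)

/-- An abelian run of period `P` is a maximal occurrence `(b,h,t,e)` with abelian period `P`
such that `e - b - h - t + 1 ≥ 2|P|`. -/
def IsAbelianRun {α : Type*} [Fintype α] [DecidableEq α]
    (w : List α) (P : α → ℕ) (b h t e : ℕ) : Prop :=
  LeftMaximal w P b h t e ∧ RightMaximal w P b h t e ∧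
  b + h + t + 2 * pnorm P ≤ e + 1

/-!
Dropping the first letter of an occurrence keeps it an occurrence with the same tail, as long as
at least one full block remains: either the head loses a letter, or, when the head is empty, the
first block loses one and becomes the new head. Hence if `b₁ < b₂` both carry occurrences ending
at `e` with tail `t`, the one at `b₁` can be shortened to start at `b₂ - 1`, so the one at `b₂` is
not left-maximal. With the start fixed, the head is `(e + 1 - b - t) mod |P|`.
-/

section
variable {α : Type*}

lemma substr_add (w : List α) (b n e : ℕ) : substr w (b + n) e = (substr w b e).drop n := by
  simp only [substr, List.drop_take, List.drop_drop, Nat.sub_sub]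

lemma length_substr {w : List α} {b e : ℕ} (he : e < w.length) :
    (substr w b e).length = e + 1 - b := by
  simp [substr]
  omega

variable [Fintype α] [DecidableEq α] {P : α → ℕ}

lemma pnorm_parikh (v : List α) : pnorm (parikh v) = v.length := by
  simpa [pnorm, parikh] using
    Multiset.sum_count_eq_card (s := Finset.univ) (m := (v : Multiset α)) (by simp)

lemma length_flatten_of_parikh_eq {us : List (List α)} (h : ∀ u ∈ us, parikh u = P) :
    us.flatten.length = us.length * pnorm P := by
  rw [List.length_flatten, List.map_congr_left (g := fun _ => pnorm P), List.map_const',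
    List.sum_replicate, smul_eq_mul]
  intro u hu
  rw [← pnorm_parikh, h u hu]

lemma plt_parikh_tail {u : List α} (hle : PLe (parikh u) P) (hlen : u.length ≤ pnorm P)
    (hne : u ≠ []) : PLt (parikh u.tail) P :=
  ⟨fun a => ((List.tail_sublist u).count_le a).trans (hle a), by
    rw [pnorm_parikh, List.length_tail]
    have := List.length_pos_iff.mpr hne
    omega⟩

def HasAbelianPeriod (P : α → ℕ) (v : List α) (h t : ℕ) : Prop :=
  ∃ (u0 uk : List α) (us : List (List α)),
    v = u0 ++ us.flatten ++ uk ∧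
    u0.length = h ∧ uk.length = t ∧
    1 ≤ us.length ∧
    (∀ u ∈ us, parikh u = P) ∧
    PLt (parikh u0) P ∧ PLt (parikh uk) P

namespace HasAbelianPeriod

variable {v : List α} {h t : ℕ}

lemma head_lt (hv : HasAbelianPeriod P v h t) : h < pnorm P := by
  obtain ⟨u0, -, -, rfl, rfl, -, -, -, hu0, -⟩ := hv
  simpa [pnorm_parikh] using hu0.2

lemma exists_length_eq (hv : HasAbelianPeriod P v h t) :
    ∃ k, 1 ≤ k ∧ v.length = h + k * pnorm P + t := by
  obtain ⟨u0, uk, us, rfl, rfl, rfl, hus, hP, -, -⟩ := hv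
  exact ⟨us.length, hus, by simp [length_flatten_of_parikh_eq hP, Nat.add_assoc]⟩

lemma tail (hv : HasAbelianPeriod P v h t) (hlen : pnorm P + t < v.length) :
    ∃ h', HasAbelianPeriod P v.tail h' t := by
  have hP := hv.head_lt
  obtain ⟨u0, uk, us, rfl, rfl, htk, hus, hPus, hu0, huk⟩ := hv
  cases u0 with
  | cons x u0' =>
    exact ⟨_, u0', uk, us, by simp, rfl, htk, hus, hPus,
      plt_parikh_tail hu0.1 (by simpa [pnorm_parikh] using hu0.2.le) (List.cons_ne_nil x u0'),
      huk⟩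
  | nil =>
    obtain _ | ⟨u1, rest⟩ := us
    · simp at hus
    have hu1 : parikh u1 = P := hPus u1 List.mem_cons_self
    have hu1len : u1.length = pnorm P := by rw [← pnorm_parikh, hu1]
    have hrest : 1 ≤ rest.length := by
      have := length_flatten_of_parikh_eq (fun u hu => hPus u (List.mem_cons_of_mem u1 hu))
      simp only [List.flatten_cons, List.nil_append, List.length_append] at hlen
      rw [this, hu1len, htk] at hlen
      exact Nat.one_le_iff_ne_zero.mpr fun h0 => by simp [h0] at hlen
    have hne : u1 ≠ [] := List.ne_nil_of_length_pos (by omega)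
    refine ⟨_, u1.tail, uk, rest, ?_, rfl, htk, hrest,
      fun u hu => hPus u (List.mem_cons_of_mem u1 hu),
      plt_parikh_tail (fun a => (congrFun hu1 a).le) hu1len.le hne, huk⟩
    obtain _ | ⟨y, u1'⟩ := u1
    · contradiction
    · simp

lemma drop (hv : HasAbelianPeriod P v h t) {n : ℕ} (hn : n + pnorm P + t ≤ v.length) :
    ∃ h', HasAbelianPeriod P (v.drop n) h' t := by
  induction n with
  | zero => exact ⟨h, hv⟩
  | succ n ih =>
    obtain ⟨h', hv'⟩ := ih (by omega)
    rw [← List.tail_drop]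
    exact hv'.tail (by simp; omega)

end HasAbelianPeriod

namespace IsOcc

variable {w : List α} {b h t e : ℕ}

lemma exists_length_eq (ho : IsOcc w P b h t e) :
    ∃ k, 1 ≤ k ∧ e + 1 = b + h + k * pnorm P + t := by
  obtain ⟨hbe, he, hv⟩ := ho
  obtain ⟨k, hk, hlen⟩ := HasAbelianPeriod.exists_length_eq hv
  rw [length_substr he] at hlen
  exact ⟨k, hk, by omega⟩

lemma head_eq_mod (ho : IsOcc w P b h t e) : h = (e + 1 - b - t) % pnorm P := by
  obtain ⟨k, -, hlen⟩ := ho.exists_length_eq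
  have hP : h < pnorm P := HasAbelianPeriod.head_lt ho.2.2
  rw [show e + 1 - b - t = h + k * pnorm P by omega, Nat.add_mul_mod_self_right,
    Nat.mod_eq_of_lt hP]

lemma shift (ho : IsOcc w P b h t e) {b' : ℕ} (hb : b ≤ b') (hb' : b' + pnorm P + t ≤ e + 1) :
    ∃ h', IsOcc w P b' h' t e := by
  obtain ⟨hbe, he, hv⟩ := ho
  obtain ⟨n, rfl⟩ := Nat.exists_eq_add_of_le hb
  obtain ⟨h', hv'⟩ := HasAbelianPeriod.drop hv (n := n) (by rw [length_substr he]; omega)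
  have : 0 < pnorm P := (HasAbelianPeriod.head_lt hv).trans_le' (Nat.zero_le h)
  exact ⟨h', by omega, he, substr_add w b n e ▸ hv'⟩

end IsOcc

lemma LeftMaximal.le_of_isOcc {w : List α} {b₁ h₁ b₂ h₂ t e : ℕ}
    (hm : LeftMaximal w P b₂ h₂ t e) (ho : IsOcc w P b₁ h₁ t e) : b₂ ≤ b₁ := by
  by_contra! hlt
  obtain ⟨k, hk, hlen⟩ := hm.1.exists_length_eq
  have : pnorm P ≤ k * pnorm P := Nat.le_mul_of_pos_left _ hk
  obtain ⟨h', ho'⟩ := ho.shift (b' := b₂ - 1) (by omega) (by omega)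
  exact hm.2 (b₂ - 1) h' t (by omega) ho'

end

theorem leftMaximal_unique_general {α : Type*} [Fintype α] [DecidableEq α]
    (w : List α) (P : α → ℕ) (e t b₁ h₁ b₂ h₂ : ℕ)
    (hm₁ : LeftMaximal w P b₁ h₁ t e) (hm₂ : LeftMaximal w P b₂ h₂ t e) :
    b₁ = b₂ ∧ h₁ = h₂ := by
  obtain rfl : b₁ = b₂ := le_antisymm (hm₁.le_of_isOcc hm₂.1) (hm₂.le_of_isOcc hm₁.1)
  exact ⟨rfl, by rw [hm₁.1.head_eq_mod, hm₂.1.head_eq_mod]⟩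

/-- At most one left-maximal occurrence with abelian period `P` ends at position `e` with a
given tail length `t < |P|`. -/
theorem leftMaximal_unique {α : Type*} [Fintype α] [DecidableEq α]
    (w : List α) (P : α → ℕ) (e t b₁ h₁ b₂ h₂ : ℕ)
    (ht : t < pnorm P)
    (hm₁ : LeftMaximal w P b₁ h₁ t e) (hm₂ : LeftMaximal w P b₂ h₂ t e) :
    b₁ = b₂ ∧ h₁ = h₂ :=
  leftMaximal_unique_general w P e t b₁ h₁ b₂ h₂ hm₁ hm₂
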